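/- arXiv:1102.1541 — 3 statements merged into one kernel-verified Lean document; each statement's English description precedes it below -/
import Mathlib

section
/- A 123-avoiding permutation σ ∈ S_ن is completely determined by the pair (vmin(σ), pmin(σ)) of the set of values and the set of positions of its left-to-right minima; that is, if σ, τ ∈ S_n both avoid 123 and have the same sets of values and positions of left-to-right minima, then σ = τ. -/
/-- A Dyck word: `true` = up step, `false` = down step. -/
def IsDyckWord (p : List Bool) : Prop :=
  (∀ t, t <+: p → t.count false ≤ t.count true) ∧ p.count true = p.count false

/-- Successive differences of a list (with an implicit initial 0). -/
def diffs (l : List ℕ) : List ℕ := l.zipWith (· - ·) (0 :: l)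

/-- The Dyck path of semilength `n` with ascent-descent code `(A, D)`. -/
def pathOfCode (n : ℕ) (A D : List ℕ) : List Bool :=
  ((diffs (A ++ [n])).zip (diffs (D ++ [n]))).flatMap
    fun ad => List.replicate ad.1 true ++ List.replicate ad.2 false

def IsLTRMin {n : ℕ} (σ : Equiv.Perm (Fin n)) (i : Fin n) : Prop := ∀ j, j < i → σ i < σ j
def IsRTLMax {n : ℕ} (σ : Equiv.Perm (Fin n)) (i : Fin n) : Prop := ∀ j, i < j → σ j < σ i

instance {n : ℕ} (σ : Equiv.Perm (Fin n)) (i : Fin n) : Decidable (IsLTRMin σ i) := by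
  unfold IsLTRMin; infer_instance
instance {n : ℕ} (σ : Equiv.Perm (Fin n)) (i : Fin n) : Decidable (IsRTLMax σ i) := by
  unfold IsRTLMax; infer_instance

def pmin {n : ℕ} (σ : Equiv.Perm (Fin n)) : Set (Fin n) := {i | IsLTRMin σ i}
def vmin {n : ℕ} (σ : Equiv.Perm (Fin n)) : Set (Fin n) := σ '' pmin σ
def pmax {n : ℕ} (σ : Equiv.Perm (Fin n)) : Set (Fin n) := {i | IsRTLMax σ i}
def vmax {n : ℕ} (σ : Equiv.Perm (Fin n)) : Set (Fin n) := σ '' pmax σ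

/-- Reverse-complement of a permutation. -/
def rcPerm {n : ℕ} (σ : Equiv.Perm (Fin n)) : Equiv.Perm (Fin n) :=
  (Fin.revPerm.trans σ).trans Fin.revPerm

def Avoids123 {n : ℕ} (σ : Equiv.Perm (Fin n)) : Prop :=
  ¬ ∃ i j k : Fin n, i < j ∧ j < k ∧ σ i < σ j ∧ σ j < σ k

def Avoids1234 {n : ℕ} (σ : Equiv.Perm (Fin n)) : Prop :=
  ¬ ∃ i j k l : Fin n, i < j ∧ j < k ∧ k < l ∧ σ i < σ j ∧ σ j < σ k ∧ σ k < σ l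

/-- The value (1-based) of the previous LTR minimum before position `i` (`n+1` if none). -/
def prevMinVal {n : ℕ} (σ : Equiv.Perm (Fin n)) (i : Fin n) : ℕ :=
  ((((List.finRange n).filter fun j => decide (j < i)).map fun j => (σ j : ℕ) + 1)).foldr min (n + 1)

/-- The map λ: each LTR minimum m_i gives m_{i-1} - m_i up steps, each maximal
block of ℓ non-minima gives ℓ+1 down steps. -/
def lamWord {n : ℕ} (σ : Equiv.Perm (Fin n)) : List Bool :=
  ((List.finRange n).flatMap fun i =>
    if IsLTRMin σ i then
      (if (i : ℕ) = 0 then [] else [false]) ++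
        List.replicate (prevMinVal σ i - ((σ i : ℕ) + 1)) true
    else [false]) ++ List.replicate (min n 1) false

/-- The value (1-based) of the largest entry to the right of position `i` (`0` if none). -/
def nextMaxVal {n : ℕ} (σ : Equiv.Perm (Fin n)) (i : Fin n) : ℕ :=
  ((((List.finRange n).filter fun j => decide (i < j)).map fun j => (σ j : ℕ) + 1)).foldr max 0

/-- The map μ: reading right to left, each RTL maximum M_i gives U^(M_i-M_{i-1}) D,
each non-maximum gives a D step. -/
def muWord {n : ℕ} (σ : Equiv.Perm (Fin n)) : List Bool :=
  (List.finRange n).reverse.flatMap fun i =>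
    if IsRTLMax σ i then
      List.replicate (((σ i : ℕ) + 1) - nextMaxVal σ i) true ++ [false]
    else [false]

/-- The set of partial sums of ascent lengths of a Dyck word (including the total). -/
def ascCode (p : List Bool) : Finset ℕ :=
  ((Finset.range p.length).filter fun i =>
      0 < i ∧ p.getD (i-1) false = true ∧ p.getD i true = false).image
    fun i => (p.take i).count true

/-- The set of partial sums of descent lengths of a Dyck word (excluding the total). -/
def descCode (p : List Bool) : Finset ℕ :=
  ((Finset.range p.length).filter fun i =>
      0 < i ∧ p.getD (i-1) true = false ∧ p.getD i false = true).image
    fun i => (p.take i).count false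

/-- Index of the first return of a Dyck word. -/
def firstRet (p : List Bool) : ℕ :=
  (((List.range (p.length + 1)).filter fun i =>
      decide (0 < i) && decide ((p.take i).count true = (p.take i).count false)).head?).getD p.length

def compsAux : ℕ → List Bool → List (List Bool)
  | 0, _ => []
  | fuel+1, p => if p = [] then [] else
      p.take (firstRet p) :: compsAux fuel (p.drop (firstRet p))

/-- Decomposition of a Dyck word into irreducible components. -/
def comps (p : List Bool) : List (List Bool) := compsAux p.length p

/-- The involution L' on an irreducible Dyck path, via ascent-descent codes. -/
def LprimeIrr (p : List Bool) : List Bool :=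
  let n := p.count true
  let A' := ((Finset.Icc 1 (n-2) \ ((ascCode p).erase n).image fun a => a - 1).image
      fun a => n - a).sort (· ≤ ·)
  let D' := ((Finset.Icc 1 (n-2) \ descCode p).image fun d => n - 1 - d).sort (· ≤ ·)
  pathOfCode n A' D'

/-- The involution L', acting on each irreducible component. -/
def LprimeWord (p : List Bool) : List Bool := (comps p).reverse.flatMap LprimeIrr

def ascList (p : List Bool) : List ℕ := ((ascCode p).erase (p.count true)).sort (· ≤ ·)
def descList (p : List Bool) : List ℕ := (descCode p).sort (· ≤ ·)

def IrreducibleDyck (p : List Bool) : Prop :=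
  IsDyckWord p ∧ p ≠ [] ∧ ∀ t, t <+: p → t ≠ [] → t ≠ p → t.count false < t.count true

/-- Covering relation: `Q` covers `P` if the code of `Q` is obtained from the code of
`P` by deleting `A_i` from the ascent code and `D_j` from the descent code, `i ≤ j`. -/
def CoversIrr (P Q : List Bool) : Prop :=
  IrreducibleDyck P ∧ IrreducibleDyck Q ∧
  ∃ i j : ℕ, i ≤ j ∧ ascList Q = (ascList P).eraseIdx i ∧ descList Q = (descList P).eraseIdx j

/-- The order relation on Dyck paths. -/
def DyckLE (P Q : List Bool) : Prop :=
  List.Forall₂ (Relation.ReflTransGen CoversIrr) (comps P) (comps Q)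

/-!
Induct on positions. If `σ` and `τ` agree before position `i`, the value `τ i` sits in `σ` at some
position `k ≥ i`. Since `vmin` and `pmin` agree, `k` is a left-to-right minimum of `σ` exactly when
`i` is one. The left-to-right minima of any permutation decrease, and in a 123-avoiding permutation
so do the remaining entries (each is preceded by a smaller one), hence `τ i ≤ σ i`; by symmetry
`σ i = τ i`.
-/

variable {n : ℕ}

lemma apply_mem_vmin_iff (σ : Equiv.Perm (Fin n)) (i : Fin n) :
    σ i ∈ vmin σ ↔ IsLTRMin σ i :=
  σ.injective.mem_set_image

lemma exists_lt_apply_lt_of_not_isLTRMin {σ : Equiv.Perm (Fin n)} {i : Fin n}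
    (h : ¬ IsLTRMin σ i) : ∃ k < i, σ k < σ i := by
  simp only [IsLTRMin, not_forall, not_lt] at h
  obtain ⟨k, hk, hle⟩ := h
  exact ⟨k, hk, hle.lt_of_ne (σ.injective.ne hk.ne)⟩

lemma Avoids123.apply_lt_apply_of_not_isLTRMin {σ : Equiv.Perm (Fin n)} (hσ : Avoids123 σ)
    {i j : Fin n} (hi : ¬ IsLTRMin σ i) (hij : i < j) : σ j < σ i := by
  obtain ⟨k, hki, hk⟩ := exists_lt_apply_lt_of_not_isLTRMin hi
  refine lt_of_le_of_ne (not_lt.mp fun hlt => hσ ⟨k, i, j, hki, hij, hk, hlt⟩) ?_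
  exact σ.injective.ne hij.ne'

lemma Avoids123.apply_lt_apply_of_isLTRMin_iff {σ : Equiv.Perm (Fin n)} (hσ : Avoids123 σ)
    {i j : Fin n} (hij : i < j) (h : IsLTRMin σ i ↔ IsLTRMin σ j) : σ j < σ i := by
  by_cases hi : IsLTRMin σ i
  · exact h.mp hi i hij
  · exact hσ.apply_lt_apply_of_not_isLTRMin hi hij

lemma Avoids123.apply_le_of_min_data {σ τ : Equiv.Perm (Fin n)} (hσ : Avoids123 σ)
    (hv : vmin σ = vmin τ) (hp : pmin σ = pmin τ) {i : Fin n}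
    (heq : ∀ j < i, σ j = τ j) : τ i ≤ σ i := by
  obtain ⟨k, hk⟩ := σ.surjective (τ i)
  rcases lt_trichotomy k i with hki | rfl | hik
  · exact absurd (τ.injective ((heq k hki).symm.trans hk)) hki.ne
  · exact hk.ge
  · have hmin : IsLTRMin σ i ↔ IsLTRMin σ k := by
      rw [← apply_mem_vmin_iff σ k, hk, hv, apply_mem_vmin_iff]
      exact Set.ext_iff.mp hp i
    exact hk ▸ (hσ.apply_lt_apply_of_isLTRMin_iff hik hmin).le

/-- A 123-avoiding permutation is determined by the values and positions of its LTR minima. -/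
theorem avoids123_eq_of_min_data {n : ℕ} (σ τ : Equiv.Perm (Fin n))
    (hσ : Avoids123 σ) (hτ : Avoids123 τ)
    (hv : vmin σ = vmin τ) (hp : pmin σ = pmin τ) : σ = τ := by
  refine Equiv.ext fun i => ?_
  induction i using WellFoundedLT.induction with
  | _ i ih =>
    exact le_antisymm (hτ.apply_le_of_min_data hv.symm hp.symm fun j hj => (ih j hj).symm)
      (hσ.apply_le_of_min_data hv hp ih)
end

section
/- A 123-avoiding permutation σ ∈ S_n is completely determined by the pair (vmax(σ), pmax(σ)) of the set of values and the set of positions of its right-to-left maxima. -/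
/-!
Every 123-avoiding permutation is the union of two decreasing sequences: its right-to-left
maxima, which are decreasing for any permutation, and the remaining entries, since a
non-maximum followed later by something larger would complete any smaller earlier entry
to a 123. A decreasing sequence is determined by its set of positions and its set of
values, and the data `(vmax σ, pmax σ)` fixes both sets for both sequences.
-/

open Set

theorem StrictAntiOn.eqOn_of_image_eq {α β : Type*} [LinearOrder α] [WellFoundedGT α]
    [Preorder β] {s : Set α} {f g : α → β} (hf : StrictAntiOn f s) (hg : StrictAntiOn g s)
    (h : f '' s = g '' s) : EqOn f g s := by
  have hrestrict : (fun x : s => f x) = fun x : s => g x :=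
    (strictAntiOn_iff_strictAnti.mp hf).range_inj (strictAntiOn_iff_strictAnti.mp hg)
      |>.mp (by rwa [← image_eq_range, ← image_eq_range])
  exact fun x hx => congrFun hrestrict ⟨x, hx⟩

section Permutation

variable {n : ℕ} (σ : Equiv.Perm (Fin n))

theorem strictAntiOn_pmax : StrictAntiOn σ (pmax σ) :=
  fun _ hi _ _ hij => hi _ hij

theorem exists_lt_of_not_isRTLMax {i : Fin n} (hi : ¬ IsRTLMax σ i) :
    ∃ k, i < k ∧ σ i < σ k := by
  simp only [IsRTLMax, not_forall, not_lt] at hi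
  obtain ⟨k, hik, hle⟩ := hi
  exact ⟨k, hik, hle.lt_of_ne (σ.injective.ne hik.ne)⟩

variable {σ} in
theorem Avoids123.strictAntiOn_compl_pmax (hσ : Avoids123 σ) :
    StrictAntiOn σ (pmax σ)ᶜ := by
  intro i _ j hj hij
  by_contra! hle
  obtain ⟨k, hjk, hjk'⟩ := exists_lt_of_not_isRTLMax σ hj
  exact hσ ⟨i, j, k, hij, hjk, hle.lt_of_ne (σ.injective.ne hij.ne), hjk'⟩

theorem image_compl_pmax : σ '' (pmax σ)ᶜ = (vmax σ)ᶜ :=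
  image_compl_eq σ.bijective

end Permutation

/-- A 123-avoiding permutation is determined by the values and positions of its RTL maxima. -/
theorem avoids123_eq_of_max_data {n : ℕ} (σ τ : Equiv.Perm (Fin n))
    (hσ : Avoids123 σ) (hτ : Avoids123 τ)
    (hv : vmax σ = vmax τ) (hp : pmax σ = pmax τ) : σ = τ := by
  ext i : 1
  by_cases hi : i ∈ pmax σ
  · refine (strictAntiOn_pmax σ).eqOn_of_image_eq ?_ ?_ hi
    · exact hp ▸ strictAntiOn_pmax τ
    · simpa only [vmax, hp] using hv
  · refine hσ.strictAntiOn_compl_pmax.eqOn_of_image_eq ?_ ?_ hi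
    · exact hp ▸ hτ.strictAntiOn_compl_pmax
    · rw [image_compl_pmax, hp, image_compl_pmax, hv]
end

section
/- The map λ : S_n(123) → D_n, sending a 123-avoiding permutation to the Dyck path that translates each LTR minimum m_i (with m_0 := n+1) into m_{i-1} − m_i up steps and each maximal block w_i of non-minima following m_i into |w_i| + 1 down steps, is a bijection between 123-avoiding permutations of length n and Dyck paths of semilength n. -/
/-!
Write `c = ltrCode σ` for the run lengths of `λ σ`: `c i = m_{k-1} - m_k` (with `m_0 = n + 1`)
when `i` is the position of the `k`-th left-to-right minimum, and `c i = 0` otherwise, so that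
`λ σ = U^{c 0} D U^{c 1} D ⋯ U^{c (n-1)} D`. Such a word is a Dyck path iff `c` is a ballot
sequence: `c 0 + ⋯ + c (k-1) ≥ k` for all `k`, with total `n`. The partial sums telescope to
`c 0 + ⋯ + c i = n - min (σ 0, …, σ i)` for values in `0, …, n-1`, and `i + 1` distinct
values cannot all exceed `n - i - 1`, so `c` is a ballot sequence.

The non-minima of a 123-avoiding permutation decrease, so the permutation is determined by the
positions and values of its left-to-right minima, which `c` records: `λ` is injective.
Conversely, given a ballot sequence, give position `i` with `c i > 0` the value
`n - (c 0 + ⋯ + c i)` and fill the remaining positions with the remaining values in decreasing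
order. A pigeonhole count using the ballot condition shows that every filled value exceeds the
running minimum, so the left-to-right minima, and hence the code, are the prescribed ones.
-/

theorem List.le_foldr_min_iff {α : Type*} [LinearOrder α] {v a : α} {l : List α} :
    v ≤ l.foldr min a ↔ v ≤ a ∧ ∀ x ∈ l, v ≤ x := by
  induction l <;> simp_all [and_left_comm]

theorem List.sum_take_mono {l : List ℕ} {j k : ℕ} (h : j ≤ k) :
    (l.take j).sum ≤ (l.take k).sum :=
  (List.take_prefix_take_left h).sublist.sum_le_sum fun _ _ => Nat.zero_le _

theorem List.eq_of_sum_take_succ_eq {M : Type*} [AddLeftCancelMonoid M] {l₁ l₂ : List M}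
    (hlen : l₁.length = l₂.length)
    (h : ∀ i < l₁.length, (l₁.take (i + 1)).sum = (l₂.take (i + 1)).sum) : l₁ = l₂ := by
  refine List.ext_getElem hlen fun i h₁ h₂ => ?_
  have hi := h i h₁
  rw [List.sum_take_succ _ _ h₁, List.sum_take_succ _ _ h₂] at hi
  rcases i with _ | i
  · simpa using hi
  · rwa [h i (by omega), add_right_inj] at hi

def wordOfRuns (l : List ℕ) : List Bool :=
  l.flatMap fun a => List.replicate a true ++ [false]

def IsBallot (l : List ℕ) : Prop :=
  (∀ k ≤ l.length, k ≤ (l.take k).sum) ∧ l.sum = l.length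

section Words

open List

@[simp] theorem wordOfRuns_nil : wordOfRuns [] = [] := rfl

theorem wordOfRuns_cons (a : ℕ) (l : List ℕ) :
    wordOfRuns (a :: l) = replicate a true ++ false :: wordOfRuns l := by
  simp [wordOfRuns]

theorem wordOfRuns_append (l₁ l₂ : List ℕ) :
    wordOfRuns (l₁ ++ l₂) = wordOfRuns l₁ ++ wordOfRuns l₂ :=
  flatMap_append

@[simp] theorem count_true_wordOfRuns (l : List ℕ) : (wordOfRuns l).count true = l.sum := by
  induction l <;> simp_all [wordOfRuns_cons]

@[simp] theorem count_false_wordOfRuns (l : List ℕ) :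
    (wordOfRuns l).count false = l.length := by
  induction l <;> simp_all [wordOfRuns_cons, count_replicate]

theorem replicate_true_append_false_cons_inj {a b : ℕ} {u v : List Bool}
    (h : replicate a true ++ false :: u = replicate b true ++ false :: v) : a = b ∧ u = v := by
  induction a generalizing b with
  | zero => cases b <;> simp_all [replicate_succ]
  | succ a ih =>
    cases b with
    | zero => simp [replicate_succ] at h
    | succ b => simpa using ih (by simpa [replicate_succ] using h)

theorem wordOfRuns_injective : Function.Injective wordOfRuns := by
  intro l₁ l₂ h
  induction l₁ generalizing l₂ with
  | nil => cases l₂ <;> simp_all [wordOfRuns_cons]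
  | cons a l₁ ih =>
    cases l₂ with
    | nil => simp [wordOfRuns_cons] at h
    | cons b l₂ =>
      obtain ⟨rfl, h'⟩ := replicate_true_append_false_cons_inj
        (by simpa only [wordOfRuns_cons] using h)
      rw [ih h']

theorem exists_eq_wordOfRuns_append_replicate (p : List Bool) :
    ∃ l k, p = wordOfRuns l ++ replicate k true := by
  induction p with
  | nil => exact ⟨[], 0, rfl⟩
  | cons b p ih =>
    obtain ⟨l, k, rfl⟩ := ih
    cases b with
    | false => exact ⟨0 :: l, k, by simp [wordOfRuns_cons]⟩
    | true =>
      cases l with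
      | nil => exact ⟨[], k + 1, by simp [replicate_succ]⟩
      | cons a l => exact ⟨(a + 1) :: l, k, by simp [wordOfRuns_cons, replicate_succ]⟩

theorem prefix_replicate_true_append_false_cons {a : ℕ} {t u : List Bool}
    (h : t <+: replicate a true ++ false :: u) :
    t.count false = 0 ∨ ∃ t', t = replicate a true ++ false :: t' ∧ t' <+: u := by
  induction a generalizing t with
  | zero =>
    rcases prefix_cons_iff.1 h with rfl | ⟨t', rfl, ht'⟩
    · simp
    · exact .inr ⟨t', rfl, ht'⟩
  | succ a ih =>
    rcases prefix_cons_iff.1 h with rfl | ⟨t', rfl, ht'⟩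
    · simp
    · rcases ih ht' with h0 | ⟨t'', rfl, ht''⟩
      · simp [h0]
      · exact .inr ⟨t'', by simp [replicate_succ], ht''⟩

theorem exists_sum_take_le_of_prefix_wordOfRuns {t : List Bool} {l : List ℕ}
    (h : t <+: wordOfRuns l) :
    ∃ k ≤ l.length, t.count false = k ∧ (l.take k).sum ≤ t.count true := by
  induction l generalizing t with
  | nil => exact ⟨0, le_rfl, by simp_all, by simp⟩
  | cons a l ih =>
    rw [wordOfRuns_cons] at h
    rcases prefix_replicate_true_append_false_cons h with h0 | ⟨t', rfl, ht'⟩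
    · exact ⟨0, by simp, h0, by simp⟩
    · obtain ⟨k, hk, hf, ht⟩ := ih ht'
      refine ⟨k + 1, by simpa using hk, by simp [hf, count_replicate], ?_⟩
      simpa using ht

theorem wordOfRuns_take_prefix (l : List ℕ) (k : ℕ) : wordOfRuns (l.take k) <+: wordOfRuns l :=
  ⟨wordOfRuns (l.drop k), by rw [← wordOfRuns_append, take_append_drop]⟩

theorem isDyckWord_wordOfRuns_iff {l : List ℕ} : IsDyckWord (wordOfRuns l) ↔ IsBallot l := by
  refine ⟨fun ⟨hpre, htot⟩ => ⟨fun k hk => ?_, by simpa using htot⟩,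
    fun ⟨hbal, htot⟩ => ⟨fun t ht => ?_, by simp [htot]⟩⟩
  · simpa [hk] using hpre _ (wordOfRuns_take_prefix l k)
  · obtain ⟨k, hk, hf, ht⟩ := exists_sum_take_le_of_prefix_wordOfRuns ht
    have := hbal k hk
    omega

theorem wordOfRuns_cons_eq (a : ℕ) (l : List ℕ) :
    wordOfRuns (a :: l) =
      replicate a true ++ (l.flatMap fun b => false :: replicate b true) ++ [false] := by
  induction l generalizing a with
  | nil => simp [wordOfRuns_cons]
  | cons b l ih => simp [wordOfRuns_cons, ih]

theorem wordOfRuns_ofFn {m : ℕ} (f : Fin m → ℕ) :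
    wordOfRuns (ofFn f) =
      ((finRange m).flatMap fun i : Fin m =>
        (if (i : ℕ) = 0 then [] else [false]) ++ replicate (f i) true) ++
      replicate (min m 1) false := by
  cases m with
  | zero => rfl
  | succ m =>
    simp [ofFn_succ, finRange_succ, wordOfRuns_cons_eq, ofFn_eq_map,
      flatMap_map, Fin.succ_ne_zero]

end Words

section LeftToRightMinima

variable {n : ℕ} (σ : Equiv.Perm (Fin n))

def ltrRun (i : Fin n) : ℕ :=
  if IsLTRMin σ i then prevMinVal σ i - ((σ i : ℕ) + 1) else 0

def ltrCode : List ℕ := List.ofFn (ltrRun σ)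

theorem isLTRMin_of_val_eq_zero {i : Fin n} (hi : (i : ℕ) = 0) : IsLTRMin σ i :=
  fun j hj => absurd hj (by simp [Fin.lt_def, hi])

theorem lamWord_eq_wordOfRuns_ltrCode : lamWord σ = wordOfRuns (ltrCode σ) := by
  rw [ltrCode, wordOfRuns_ofFn, lamWord]
  congr 1
  refine List.flatMap_congr fun i _ => ?_
  by_cases hi : IsLTRMin σ i
  · simp [ltrRun, hi]
  · have : (i : ℕ) ≠ 0 := fun h => hi (isLTRMin_of_val_eq_zero σ h)
    simp [ltrRun, hi, this]

variable {σ}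

theorem le_prevMinVal_iff {i : Fin n} {v : ℕ} :
    v ≤ prevMinVal σ i ↔ v ≤ n + 1 ∧ ∀ j < i, v ≤ (σ j : ℕ) + 1 := by
  simp [prevMinVal, List.le_foldr_min_iff]

variable (σ) in
def prefixMinVal (i : Fin n) : ℕ := min ((σ i : ℕ) + 1) (prevMinVal σ i)

theorem le_prefixMinVal_iff {i : Fin n} {v : ℕ} :
    v ≤ prefixMinVal σ i ↔ ∀ j ≤ i, v ≤ (σ j : ℕ) + 1 := by
  rw [prefixMinVal, le_min_iff, le_prevMinVal_iff]
  refine ⟨fun ⟨hi, _, hlt⟩ j hj => ?_, fun h => ⟨h i le_rfl, ?_, fun j hj => h j hj.le⟩⟩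
  · rcases hj.lt_or_eq with hj | rfl
    exacts [hlt j hj, hi]
  · have := h i le_rfl
    omega

theorem prefixMinVal_le {i j : Fin n} (hj : j ≤ i) : prefixMinVal σ i ≤ (σ j : ℕ) + 1 :=
  le_prefixMinVal_iff.1 le_rfl j hj

theorem isLTRMin_iff_lt_prevMinVal {i : Fin n} :
    IsLTRMin σ i ↔ (σ i : ℕ) + 1 < prevMinVal σ i := by
  rw [Nat.lt_iff_add_one_le, le_prevMinVal_iff]
  have := (σ i).isLt
  refine ⟨fun h => ⟨by omega, fun j hj => ?_⟩, fun h j hj => ?_⟩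
  · have := Fin.lt_def.1 (h j hj)
    omega
  · have := h.2 j hj
    exact Fin.lt_def.2 (by omega)

theorem ltrRun_eq_sub (i : Fin n) : ltrRun σ i = prevMinVal σ i - prefixMinVal σ i := by
  unfold ltrRun prefixMinVal
  split_ifs with h
  · rw [min_eq_left (isLTRMin_iff_lt_prevMinVal.1 h).le]
  · rw [isLTRMin_iff_lt_prevMinVal, not_lt] at h
    rw [min_eq_right h, Nat.sub_self]

theorem prevMinVal_of_val_eq_zero {i : Fin n} (hi : (i : ℕ) = 0) : prevMinVal σ i = n + 1 :=
  eq_of_forall_le_iff fun v => by simp [le_prevMinVal_iff, Fin.lt_def, hi]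

theorem prevMinVal_succ {i : Fin n} (h : (i : ℕ) + 1 < n) :
    prevMinVal σ ⟨i + 1, h⟩ = prefixMinVal σ i :=
  eq_of_forall_le_iff fun v => by
    rw [le_prevMinVal_iff, le_prefixMinVal_iff]
    simp only [Fin.lt_def, Fin.le_def, Nat.lt_succ_iff]
    refine ⟨fun h' => h'.2, fun h' => ⟨?_, h'⟩⟩
    have := h' i le_rfl
    omega

theorem sum_take_succ_ltrCode_add_prefixMinVal_eq (i : Fin n) :
    ((ltrCode σ).take (i + 1)).sum + prefixMinVal σ i =
      ((ltrCode σ).take i).sum + prevMinVal σ i := by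
  rw [List.sum_take_succ _ _ (by simp [ltrCode])]
  simp only [ltrCode, List.getElem_ofFn, Fin.eta, ltrRun_eq_sub]
  have : prefixMinVal σ i ≤ prevMinVal σ i := min_le_right _ _
  omega

variable (σ) in
theorem sum_take_ltrCode_add_prevMinVal (i : Fin n) :
    ((ltrCode σ).take i).sum + prevMinVal σ i = n + 1 := by
  obtain ⟨k, hk⟩ := i
  induction k with
  | zero => simp [prevMinVal_of_val_eq_zero]
  | succ k ih =>
    have h := sum_take_succ_ltrCode_add_prefixMinVal_eq (σ := σ) ⟨k, by omega⟩
    rw [← prevMinVal_succ hk] at h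
    simp only at h ih ⊢
    have := ih (by omega)
    omega

variable (σ) in
theorem sum_take_succ_ltrCode_add_prefixMinVal (i : Fin n) :
    ((ltrCode σ).take (i + 1)).sum + prefixMinVal σ i = n + 1 := by
  rw [sum_take_succ_ltrCode_add_prefixMinVal_eq, sum_take_ltrCode_add_prevMinVal]

variable (σ) in
theorem exists_le_val_add_lt (i : Fin n) : ∃ j ≤ i, (σ j : ℕ) + i < n := by
  by_contra! h
  have := Finset.card_le_card_of_injOn (fun j => (σ j : ℕ)) (s := Finset.Iic i)
    (t := Finset.Ico (n - i) n) (fun j hj => by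
      have := h j (by simpa using hj)
      have := (σ j).isLt
      simp only [Finset.coe_Ico, Set.mem_Ico]
      omega) (fun a _ b _ hab => σ.injective (Fin.ext hab))
  simp only [Fin.card_Iic, Nat.card_Ico] at this
  omega

variable (σ) in
theorem isBallot_ltrCode : IsBallot (ltrCode σ) := by
  have hlen : (ltrCode σ).length = n := List.length_ofFn
  refine ⟨fun k hk => ?_, ?_⟩
  · rcases k with _ | k
    · simp
    obtain ⟨j, hj, hlt⟩ := exists_le_val_add_lt σ ⟨k, by omega⟩
    have := sum_take_succ_ltrCode_add_prefixMinVal σ ⟨k, by omega⟩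
    have := prefixMinVal_le (σ := σ) hj
    simp only at *
    omega
  · rcases n with _ | m
    · simp [ltrCode]
    have hsum := sum_take_succ_ltrCode_add_prefixMinVal σ (Fin.last m)
    have hle := prefixMinVal_le (σ := σ) (Fin.le_last (σ.symm 0))
    have hge := le_prefixMinVal_iff (σ := σ) (i := Fin.last m) (v := 1) |>.2 fun j _ => by omega
    rw [Fin.val_last, List.take_of_length_le (by simp [hlen])] at hsum
    simp only [Equiv.apply_symm_apply, Fin.val_zero] at hle
    omega

theorem isLTRMin_iff_ltrRun_pos {i : Fin n} : IsLTRMin σ i ↔ 0 < ltrRun σ i := by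
  unfold ltrRun
  split_ifs with h
  · simpa [h] using isLTRMin_iff_lt_prevMinVal.1 h
  · simpa using h

theorem val_eq_of_isLTRMin {i : Fin n} (h : IsLTRMin σ i) :
    (σ i : ℕ) = n - ((ltrCode σ).take (i + 1)).sum := by
  have := sum_take_succ_ltrCode_add_prefixMinVal σ i
  rw [prefixMinVal, min_eq_left (isLTRMin_iff_lt_prevMinVal.1 h).le] at this
  omega

theorem Avoids123.le_apply_of_eq_before {τ : Equiv.Perm (Fin n)} (hσ : Avoids123 σ) {i : Fin n}
    (hi : ¬IsLTRMin σ i) (hbefore : ∀ j < i, σ j = τ j) : τ i ≤ σ i := by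
  by_contra! hlt
  -- `τ i` is taken by `σ` at some `j > i`, and `k, i, j` is a 123 for `σ`
  obtain ⟨k, hki, hk⟩ : ∃ k < i, σ k < σ i := by
    simp only [IsLTRMin, not_forall, not_lt, exists_prop] at hi
    obtain ⟨k, hki, hk⟩ := hi
    exact ⟨k, hki, lt_of_le_of_ne hk (σ.injective.ne hki.ne)⟩
  have hij : i < σ.symm (τ i) := by
    rcases lt_trichotomy i (σ.symm (τ i)) with h | h | h
    · exact h
    · have := congrArg σ h
      simp only [Equiv.apply_symm_apply] at this
      exact absurd this hlt.ne
    · have := hbefore _ h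
      simp only [Equiv.apply_symm_apply] at this
      exact absurd (τ.injective this).symm h.ne
  exact hσ ⟨k, i, σ.symm (τ i), hki, hij, hk, by simpa using hlt⟩

theorem Avoids123.eq_of_isLTRMin {τ : Equiv.Perm (Fin n)} (hσ : Avoids123 σ) (hτ : Avoids123 τ)
    (hmin : ∀ i, IsLTRMin σ i ↔ IsLTRMin τ i) (hval : ∀ i, IsLTRMin σ i → σ i = τ i) :
    σ = τ := by
  by_contra hne
  obtain ⟨i, hi, hfirst⟩ := wellFounded_lt.has_min {i | σ i ≠ τ i} <| by
    by_contra h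
    exact hne (Equiv.ext fun i => by_contra fun hi => h ⟨i, hi⟩)
  have hbefore : ∀ j < i, σ j = τ j := fun j hj => by_contra fun h => hfirst j h hj
  have hσi : ¬IsLTRMin σ i := fun h => hi (hval i h)
  exact hi <| le_antisymm
    (hτ.le_apply_of_eq_before ((hmin i).not.1 hσi) fun j hj => (hbefore j hj).symm)
    (hσ.le_apply_of_eq_before hσi hbefore)

theorem eq_of_ltrCode_eq {τ : Equiv.Perm (Fin n)} (hσ : Avoids123 σ) (hτ : Avoids123 τ)
    (h : ltrCode σ = ltrCode τ) : σ = τ := by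
  have hrun : ltrRun σ = ltrRun τ := List.ofFn_injective h
  have hmin : ∀ i, IsLTRMin σ i ↔ IsLTRMin τ i := fun i => by
    rw [isLTRMin_iff_ltrRun_pos, isLTRMin_iff_ltrRun_pos, hrun]
  refine hσ.eq_of_isLTRMin hτ hmin fun i hi => Fin.ext ?_
  rw [val_eq_of_isLTRMin hi, val_eq_of_isLTRMin ((hmin i).1 hi), h]

end LeftToRightMinima

def minPos (l : List ℕ) : Set (Fin l.length) := {i | 0 < l[(i : ℕ)]}

@[simp] theorem mem_minPos {l : List ℕ} {i : Fin l.length} :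
    i ∈ minPos l ↔ 0 < l[(i : ℕ)] :=
  Iff.rfl

instance {l : List ℕ} : DecidablePred (· ∈ minPos l) := fun _ =>
  decidable_of_iff _ mem_minPos.symm

theorem IsBallot.sum_take_le {l : List ℕ} (hl : IsBallot l) (k : ℕ) :
    (l.take k).sum ≤ l.length :=
  hl.2 ▸ (List.take_sublist k l).sum_le_sum fun _ _ => Nat.zero_le _

namespace IsBallot

variable {l : List ℕ} (hl : IsBallot l)

-- the running minimum of `hl.perm` at position `i` (see `prefixMinVal_perm`)
def level (i : Fin l.length) : Fin l.length :=
  ⟨l.length - (l.take (i + 1)).sum, by have := hl.1 (i + 1) i.isLt; omega⟩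

theorem level_le_level {i j : Fin l.length} (h : j ≤ i) : hl.level i ≤ hl.level j :=
  Fin.le_def.2 <| Nat.sub_le_sub_left (List.sum_take_mono (by simpa using h)) _

theorem level_lt_level {i j : Fin l.length} (h : j < i) (hi : i ∈ minPos l) :
    hl.level i < hl.level j := by
  have h₁ : (l.take (j + 1)).sum ≤ (l.take i).sum := List.sum_take_mono h
  have h₂ := List.sum_take_succ l i i.isLt
  have h₃ := hl.sum_take_le (i + 1)
  rw [mem_minPos] at hi
  simp only [level, Fin.mk_lt_mk]
  omega

theorem injOn_level : Set.InjOn hl.level (minPos l) := fun i hi j hj h => by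
  by_contra hne
  rcases lt_or_gt_of_ne hne with hij | hji
  exacts [(hl.level_lt_level hij hj).ne' h, (hl.level_lt_level hji hi).ne h]

theorem exists_mem_minPos_le_level_eq (i : Fin l.length) :
    ∃ p ≤ i, p ∈ minPos l ∧ hl.level p = hl.level i := by
  obtain ⟨k, hk⟩ := i
  induction k with
  | zero =>
    refine ⟨⟨0, hk⟩, le_rfl, ?_, rfl⟩
    have := hl.1 1 hk
    simp only [zero_add, List.sum_take_succ l 0 hk, List.take_zero, List.sum_nil] at this
    exact this
  | succ k ih =>
    by_cases hpos : (⟨k + 1, hk⟩ : Fin l.length) ∈ minPos l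
    · exact ⟨_, le_rfl, hpos, rfl⟩
    obtain ⟨p, hpk, hp, hlev⟩ := ih (by omega)
    refine ⟨p, hpk.trans (Fin.le_def.2 (by simp)), hp, hlev.trans (Fin.ext ?_)⟩
    simp only [mem_minPos, not_lt, Nat.le_zero] at hpos
    simp [level, List.sum_take_succ l (k + 1) hk, hpos]

def minVals : Set (Fin l.length) := hl.level '' minPos l

open scoped Classical in
theorem card_compl_minPos : Fintype.card ↥(minPos l)ᶜ = Fintype.card ↥hl.minValsᶜ := by
  rw [Fintype.card_compl_set, Fintype.card_compl_set]
  congr 1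
  convert Fintype.card_congr (Equiv.Set.imageOfInjOn _ _ hl.injOn_level)
  rfl

open scoped Classical in
noncomputable def nonMinIso : ↥(minPos l)ᶜ ≃o (↥hl.minValsᶜ)ᵒᵈ :=
  ((Fintype.orderIsoFinOfCardEq _ rfl).symm.trans Fin.revOrderIso.symm).trans
    (Fintype.orderIsoFinOfCardEq _ hl.card_compl_minPos.symm).dual

-- Positions in `minPos l` get their level; the others get the remaining values in decreasing order.
open scoped Classical in
noncomputable def perm : Equiv.Perm (Fin l.length) :=
  (Equiv.sumCompl (· ∈ minPos l)).symm.trans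
    (((Equiv.Set.imageOfInjOn _ _ hl.injOn_level).sumCongr hl.nonMinIso.toEquiv).trans
      (Equiv.sumCompl (· ∈ hl.minVals)))

theorem perm_apply_of_mem {i : Fin l.length} (h : i ∈ minPos l) : hl.perm i = hl.level i := by
  simp only [perm, Equiv.trans_apply, Equiv.sumCompl_symm_apply_of_pos h]
  rfl

theorem perm_lt_perm_of_notMem {i j : Fin l.length} (hi : i ∉ minPos l) (hj : j ∉ minPos l)
    (hij : i < j) : hl.perm j < hl.perm i := by
  simp only [perm, Equiv.trans_apply, Equiv.sumCompl_symm_apply_of_neg hi,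
    Equiv.sumCompl_symm_apply_of_neg hj]
  exact Subtype.coe_lt_coe.2 <|
    hl.nonMinIso.strictMono (show (⟨i, hi⟩ : ↥(minPos l)ᶜ) < ⟨j, hj⟩ from hij)

theorem level_lt_perm {i : Fin l.length} (hi : i ∉ minPos l) : hl.level i < hl.perm i := by
  obtain ⟨p, hpi, hp, hlev⟩ := hl.exists_mem_minPos_le_level_eq i
  have hne : hl.perm i ≠ hl.level i := by
    rw [← hlev, ← hl.perm_apply_of_mem hp]
    exact hl.perm.injective.ne fun h => hi (h ▸ hp)
  refine lt_of_le_of_ne (not_lt.1 fun hlt => ?_) hne.symm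
  -- then all `n - i` positions `≥ i` take values `< level i`, too many by the ballot condition
  have hmaps : Set.MapsTo hl.perm (Finset.Ici i) (Finset.Iio (hl.level i)) := by
    intro j hj
    simp only [Finset.coe_Ici, Finset.coe_Iio, Set.mem_Ici, Set.mem_Iio] at hj ⊢
    rcases hj.eq_or_lt with rfl | hij
    · exact hlt
    by_cases hj' : j ∈ minPos l
    · exact hl.perm_apply_of_mem hj' ▸ hl.level_lt_level hij hj'
    · exact (hl.perm_lt_perm_of_notMem hi hj' hij).trans hlt
  have hcard := Finset.card_le_card_of_injOn _ hmaps hl.perm.injective.injOn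
  have := hl.1 (i + 1) i.isLt
  simp only [Fin.card_Ici, Fin.card_Iio, level] at hcard
  omega

theorem level_le_perm (i : Fin l.length) : hl.level i ≤ hl.perm i := by
  by_cases hi : i ∈ minPos l
  · exact (hl.perm_apply_of_mem hi).ge
  · exact (hl.level_lt_perm hi).le

theorem prefixMinVal_perm (i : Fin l.length) : prefixMinVal hl.perm i = hl.level i + 1 := by
  refine eq_of_forall_le_iff fun v => ?_
  rw [le_prefixMinVal_iff]
  obtain ⟨p, hpi, hp, hlev⟩ := hl.exists_mem_minPos_le_level_eq i
  refine ⟨fun h => ?_, fun h j hj => h.trans ?_⟩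
  · simpa [hl.perm_apply_of_mem hp, hlev] using h p hpi
  · have := Fin.le_def.1 ((hl.level_le_level hj).trans (hl.level_le_perm j))
    omega

theorem ltrCode_perm : ltrCode hl.perm = l := by
  refine List.eq_of_sum_take_succ_eq (by simp [ltrCode]) fun i hi => ?_
  have hi' : i < l.length := by simpa [ltrCode] using hi
  have h := sum_take_succ_ltrCode_add_prefixMinVal hl.perm ⟨i, hi'⟩
  rw [hl.prefixMinVal_perm] at h
  have := hl.sum_take_le (i + 1)
  simp only [level] at h
  omega

theorem isLTRMin_perm_iff {i : Fin l.length} : IsLTRMin hl.perm i ↔ i ∈ minPos l := by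
  rw [isLTRMin_iff_ltrRun_pos, mem_minPos,
    ← List.getElem_of_eq hl.ltrCode_perm (by simp [ltrCode])]
  simp [ltrCode]

theorem avoids123_perm : Avoids123 hl.perm := by
  rintro ⟨a, b, c, hab, hbc, h₁, h₂⟩
  have hb : b ∉ minPos l := fun hb => (hl.isLTRMin_perm_iff.2 hb a hab).not_gt h₁
  have hc : c ∉ minPos l := fun hc => (hl.isLTRMin_perm_iff.2 hc b hbc).not_gt h₂
  exact (hl.perm_lt_perm_of_notMem hb hc hbc).not_gt h₂

end IsBallot

theorem exists_avoids123_ltrCode_eq {n : ℕ} {l : List ℕ} (hl : IsBallot l) (hn : l.length = n) :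
    ∃ σ : Equiv.Perm (Fin n), Avoids123 σ ∧ ltrCode σ = l := by
  subst hn
  exact ⟨hl.perm, hl.avoids123_perm, hl.ltrCode_perm⟩

theorem exists_isBallot_of_isDyckWord {p : List Bool} (hp : IsDyckWord p) :
    ∃ l, IsBallot l ∧ p = wordOfRuns l := by
  obtain ⟨l, k, rfl⟩ := exists_eq_wordOfRuns_append_replicate p
  have hpre := hp.1 _ (List.prefix_append _ _)
  have htot := hp.2
  simp only [List.count_append, List.count_replicate, count_true_wordOfRuns,
    count_false_wordOfRuns, BEq.rfl, beq_false, Bool.not_true, Bool.false_eq_true, ↓reduceIte,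
    add_zero] at hpre htot
  obtain rfl : k = 0 := by omega
  rw [List.replicate_zero, List.append_nil] at hp ⊢
  exact ⟨l, isDyckWord_wordOfRuns_iff.1 hp, rfl⟩

/-- The map λ is a bijection between 123-avoiding permutations of length n and Dyck
paths of semilength n. -/
theorem lamWord_bijOn (n : ℕ) :
    Set.BijOn (lamWord (n := n)) {σ | Avoids123 σ}
      {p : List Bool | IsDyckWord p ∧ p.count true = n} := by
  refine ⟨fun σ _ => ?_, fun σ hσ τ hτ h => ?_, fun p ⟨hp, hn⟩ => ?_⟩
  · refine ⟨?_, ?_⟩ <;> rw [lamWord_eq_wordOfRuns_ltrCode]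
    · exact isDyckWord_wordOfRuns_iff.2 (isBallot_ltrCode σ)
    · rw [count_true_wordOfRuns, (isBallot_ltrCode σ).2, ltrCode, List.length_ofFn]
  · rw [lamWord_eq_wordOfRuns_ltrCode, lamWord_eq_wordOfRuns_ltrCode] at h
    exact eq_of_ltrCode_eq hσ hτ (wordOfRuns_injective h)
  · obtain ⟨l, hl, rfl⟩ := exists_isBallot_of_isDyckWord hp
    obtain ⟨σ, hσ, hcode⟩ :=
      exists_avoids123_ltrCode_eq hl (by rw [← hl.2, ← count_true_wordOfRuns, hn])
    exact ⟨σ, hσ, by rw [lamWord_eq_wordOfRuns_ltrCode, hcode]⟩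
end
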